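/- arXiv:1806.05531 — 2 statements merged into one kernel-verified Lean document; each statement's English description precedes it below -/
import Mathlib

section
/- Let (R, m) be a complete Noetherian local ring (i.e. R is m-adically complete), let E be an injective hull of the residue field R/m, and write D(-) = Hom_R(-, E) for the Matlis duality functor. Let M be an Artinian R-module. Then the map Φ : Hom_R(M, M) → Hom_R(D(M), D(M)) defined by Φ(φ)(θ) = θ ∘ φ for φ ∈ Hom_R(M, M) and θ ∈ D(M) is bijective (an isomorphism of R-modules). -/
/-!
`E` is a cogenerator (it is injective and contains `k`), so `Φ` is injective, and `Φ` is
surjective once the evaluation map `M → D(D(M))` is bijective: then `Φ(ev⁻¹ ∘ D(ψ) ∘ ev) = ψ`.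

Essentiality of `k ⊆ E` makes every element of `E` killed by a power of `m`. On the layer
`E_t = (0 :_E m^t)` every endomorphism of `E` acts as a scalar `r_t`, unique modulo `m^t`, so by
completeness of `R` every endomorphism of `E` is a scalar. Hence evaluation is bijective for
`E^n`, and it transfers to the Artinian module `M`, which embeds into some `E^n` because a
minimal finite intersection of kernels of maps `M → E` is zero.
-/

open IsLocalRing Submodule LinearMap

universe u v

theorem Module.Injective.exists_comp_eq_of_ker_le {R : Type u} [Ring R] {Q P Y : Type v}
    [AddCommGroup Q] [Module R Q] [Module.Injective R Q] [AddCommGroup P] [Module R P]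
    [AddCommGroup Y] [Module R Y] (α : P →ₗ[R] Y) (g : P →ₗ[R] Q) (h : ker α ≤ ker g) :
    ∃ Λ : Y →ₗ[R] Q, Λ ∘ₗ α = g := by
  obtain ⟨Λ, hΛ⟩ := Module.Injective.out ((ker α).liftQ α le_rfl)
    (ker_eq_bot.mp (ker_liftQ_eq_bot _ _ _ le_rfl)) ((ker α).liftQ g h)
  exact ⟨Λ, LinearMap.ext fun x => hΛ (Submodule.Quotient.mk x)⟩

namespace Matlis

variable {R E : Type u} [CommRing R] [IsLocalRing R] [AddCommGroup E] [Module R E]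
  (ι : ResidueField R →ₗ[R] E)

theorem exists_apply_ne_zero [Module.Injective R E] (hι : Function.Injective ι)
    {N : Type u} [AddCommGroup N] [Module R N] {x : N} (hx : x ≠ 0) :
    ∃ θ : N →ₗ[R] E, θ x ≠ 0 := by
  have hker : ker (toSpanSingleton R N x) ≤ ker (ι ∘ₗ Algebra.linearMap R (ResidueField R)) := by
    intro r hr
    have hrm : r ∈ maximalIdeal R := le_maximalIdeal (fun htop => hx <| by
      simpa using (htop ▸ mem_top : (1 : R) ∈ ker (toSpanSingleton R N x))) hr
    simp [(residue_eq_zero_iff r).mpr hrm]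
  obtain ⟨θ, hθ⟩ := Module.Injective.exists_comp_eq_of_ker_le _ _ hker
  refine ⟨θ, fun h0 => one_ne_zero (hι ?_ : (1 : ResidueField R) = 0)⟩
  simpa [h0] using (LinearMap.congr_fun hθ 1).symm

theorem eq_of_forall_apply_eq [Module.Injective R E] (hι : Function.Injective ι)
    {N : Type u} [AddCommGroup N] [Module R N] {x y : N} (h : ∀ θ : N →ₗ[R] E, θ x = θ y) :
    x = y := by
  by_contra hne
  obtain ⟨θ, hθ⟩ := exists_apply_ne_zero ι hι (sub_ne_zero.mpr hne)
  exact hθ (by rw [map_sub, h θ, sub_self])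

theorem smul_apply_eq_zero {a : R} (ha : a ∈ maximalIdeal R) (w : ResidueField R) :
    a • ι w = 0 := by
  rw [← map_smul, Algebra.smul_def, ResidueField.algebraMap_eq, (residue_eq_zero_iff a).mpr ha,
    zero_mul, map_zero]

theorem mem_range_of_mem_torsionBySet_maximalIdeal
    (hess : ∀ N : Submodule R E, N ≠ ⊥ → N ⊓ range ι ≠ ⊥) {x : E}
    (hx : x ∈ torsionBySet R E (maximalIdeal R)) : x ∈ range ι := by
  rcases eq_or_ne x 0 with rfl | hx0
  · exact zero_mem _
  obtain ⟨z, hz, hz0⟩ :=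
    exists_mem_ne_zero_of_ne_bot (hess (R ∙ x) (by simpa [span_singleton_eq_bot]))
  obtain ⟨⟨c, rfl⟩, w, hw⟩ := And.imp mem_span_singleton.mp id (mem_inf.mp hz)
  obtain ⟨u, rfl⟩ : IsUnit c := by
    by_contra hc
    exact hz0 ((mem_torsionBySet_iff _ _).mp hx ⟨c, hc⟩)
  exact ⟨(↑u⁻¹ : R) • w, by rw [map_smul, hw, smul_smul, Units.inv_mul, one_smul]⟩

theorem maximalIdeal_le_of_mem_associatedPrimes [IsNoetherianRing R]
    (hess : ∀ N : Submodule R E, N ≠ ⊥ → N ⊓ range ι ≠ ⊥) {p : Ideal R}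
    (hp : p ∈ associatedPrimes R E) : maximalIdeal R ≤ p := by
  obtain ⟨hprime, y, rfl⟩ := isAssociatedPrime_iff.mp hp
  have hy : y ≠ 0 := by
    rintro rfl
    exact hprime.ne_top (by ext; simp [mem_colon_singleton])
  obtain ⟨z, hz, hz0⟩ :=
    exists_mem_ne_zero_of_ne_bot (hess (R ∙ y) (by simpa [span_singleton_eq_bot]))
  obtain ⟨⟨c, rfl⟩, w, hw⟩ := And.imp mem_span_singleton.mp id (mem_inf.mp hz)
  intro a ha
  have hac : a * c ∈ (⊥ : Submodule R E).colon {y} := by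
    rw [mem_colon_singleton, mem_bot, mul_smul, ← hw, smul_apply_eq_zero ι ha]
  refine (hprime.mem_or_mem hac).resolve_right fun hc => hz0 ?_
  rwa [mem_colon_singleton, mem_bot] at hc

theorem exists_mem_torsionBySet_pow [IsNoetherianRing R]
    (hess : ∀ N : Submodule R E, N ≠ ⊥ → N ⊓ range ι ≠ ⊥) (x : E) :
    ∃ t : ℕ, x ∈ torsionBySet R E ↑(maximalIdeal R ^ t) := by
  have hrad : maximalIdeal R ≤ (R ∙ x).annihilator.radical := by
    rw [← Ideal.sInf_minimalPrimes]
    refine le_sInf fun p hp => maximalIdeal_le_of_mem_associatedPrimes ι hess ?_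
    exact associatedPrimes.subset_of_injective (R ∙ x).injective_subtype
      (Module.associatedPrimes.minimalPrimes_annihilator_subset_associatedPrimes R _ hp)
  obtain ⟨t, ht⟩ := Ideal.exists_pow_le_of_le_radical_of_fg hrad (IsNoetherian.noetherian _)
  exact ⟨t, (mem_torsionBySet_iff _ _).mpr fun ⟨r, hr⟩ =>
    mem_annihilator.mp (ht hr) x (mem_span_singleton_self x)⟩

theorem exists_smul_eq_on_range
    (hess : ∀ N : Submodule R E, N ≠ ⊥ → N ⊓ range ι ≠ ⊥) (φ : E →ₗ[R] E) :
    ∃ r : R, ∀ w, φ (ι w) = r • ι w := by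
  have h1 : φ (ι 1) ∈ range ι := mem_range_of_mem_torsionBySet_maximalIdeal ι hess <|
    (mem_torsionBySet_iff _ _).mpr fun ⟨a, ha⟩ => by
      rw [← map_smul, smul_apply_eq_zero ι ha, map_zero]
  obtain ⟨c, hc⟩ := h1
  obtain ⟨r, rfl⟩ := residue_surjective c
  refine ⟨r, fun w => ?_⟩
  obtain ⟨b, rfl⟩ := residue_surjective w
  simp only [← ResidueField.algebraMap_eq, Algebra.algebraMap_eq_smul_one, map_smul] at hc ⊢
  rw [← hc, smul_comm]

theorem smul_mem_range_of_mem_torsionBySet_pow_succ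
    (hess : ∀ N : Submodule R E, N ≠ ⊥ → N ⊓ range ι ≠ ⊥) {t : ℕ} {s : R}
    (hs : s ∈ maximalIdeal R ^ t) {x : E}
    (hx : x ∈ torsionBySet R E ↑(maximalIdeal R ^ (t + 1))) : s • x ∈ range ι := by
  refine mem_range_of_mem_torsionBySet_maximalIdeal ι hess ((mem_torsionBySet_iff _ _).mpr ?_)
  rintro ⟨a, ha⟩
  rw [smul_smul]
  exact (mem_torsionBySet_iff _ _).mp hx ⟨a * s, by rw [pow_succ']; exact Ideal.mul_mem_mul ha hs⟩

theorem exists_smul_eq_on_torsionBySet_succ [IsNoetherianRing R] [Module.Injective R E]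
    (hess : ∀ N : Submodule R E, N ≠ ⊥ → N ⊓ range ι ≠ ⊥) (t : ℕ) (g : E →ₗ[R] E)
    (hg : ∀ x ∈ torsionBySet R E ↑(maximalIdeal R ^ t), g x = 0) :
    ∃ s : R, ∀ x ∈ torsionBySet R E ↑(maximalIdeal R ^ (t + 1)), g x = s • x := by
  classical
  obtain ⟨S, hS⟩ := (IsNoetherian.noetherian (maximalIdeal R ^ t) : (maximalIdeal R ^ t).FG)
  have hSmem : ∀ j : S, (j : R) ∈ maximalIdeal R ^ t := fun j => hS ▸ subset_span j.2
  set P := torsionBySet R E ↑(maximalIdeal R ^ (t + 1))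
  let α : P →ₗ[R] (S → E) := LinearMap.pi fun j => (j : R) • P.subtype
  have hker : ker α ≤ ker (g ∘ₗ P.subtype) := by
    intro X hX
    refine hg X ?_
    rw [← hS, ← torsionBySet_eq_torsionBySet_span, mem_torsionBySet_iff]
    exact fun j => congrFun hX j
  -- `g` factors through `α`, and `Λ ∘ single j` is a scalar on the socle, where `j • x` lies.
  obtain ⟨Λ, hΛ⟩ := Module.Injective.exists_comp_eq_of_ker_le α _ hker
  choose r hr using fun j : S => exists_smul_eq_on_range ι hess (Λ ∘ₗ single R (fun _ => E) j)
  refine ⟨∑ j, r j * j, fun x hx => ?_⟩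
  calc g x = Λ (α ⟨x, hx⟩) := (LinearMap.congr_fun hΛ ⟨x, hx⟩).symm
    _ = ∑ j, Λ (Pi.single j ((j : R) • x)) := by
      rw [← map_sum, Finset.univ_sum_single]; rfl
    _ = ∑ j, (r j * j) • x := by
      refine Finset.sum_congr rfl fun j _ => ?_
      obtain ⟨w, hw⟩ := smul_mem_range_of_mem_torsionBySet_pow_succ ι hess (hSmem j) hx
      rw [mul_smul, ← hw]
      exact hr j w
    _ = (∑ j, r j * j) • x := (Finset.sum_smul ..).symm

theorem exists_smul_eq_on_torsionBySet [IsNoetherianRing R] [Module.Injective R E]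
    (hess : ∀ N : Submodule R E, N ≠ ⊥ → N ⊓ range ι ≠ ⊥) (t : ℕ) (f : E →ₗ[R] E) :
    ∃ r : R, ∀ x ∈ torsionBySet R E ↑(maximalIdeal R ^ t), f x = r • x := by
  induction t with
  | zero =>
    refine ⟨0, fun x hx => ?_⟩
    obtain rfl : x = 0 := by simpa using (mem_torsionBySet_iff _ _).mp hx ⟨1, by simp⟩
    simp
  | succ t ih =>
    obtain ⟨r, hr⟩ := ih
    obtain ⟨s, hs⟩ := exists_smul_eq_on_torsionBySet_succ ι hess t (f - r • LinearMap.id)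
      fun x hx => by simp [hr x hx]
    refine ⟨r + s, fun x hx => ?_⟩
    rw [add_smul, ← hs x hx]
    simp

theorem mem_pow_of_forall_smul_eq_zero [Module.Injective R E] (hι : Function.Injective ι)
    {t : ℕ} {s : R} (hs : ∀ x ∈ torsionBySet R E ↑(maximalIdeal R ^ t), s • x = 0) :
    s ∈ maximalIdeal R ^ t := by
  by_contra hst
  obtain ⟨θ, hθ⟩ := exists_apply_ne_zero ι hι
    (x := Ideal.Quotient.mk (maximalIdeal R ^ t) s) (by rwa [ne_eq, Ideal.Quotient.eq_zero_iff_mem])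
  have hmk : ∀ a : R, Ideal.Quotient.mk (maximalIdeal R ^ t) a = a • 1 := fun a =>
    Algebra.algebraMap_eq_smul_one a
  refine hθ ?_
  rw [hmk, map_smul]
  refine hs _ ((mem_torsionBySet_iff _ _).mpr fun ⟨a, ha⟩ => ?_)
  rw [← map_smul, ← hmk, Ideal.Quotient.eq_zero_iff_mem.mpr ha, map_zero]

theorem exists_smul_eq [IsNoetherianRing R] [IsAdicComplete (maximalIdeal R) R]
    [Module.Injective R E] (hι : Function.Injective ι)
    (hess : ∀ N : Submodule R E, N ≠ ⊥ → N ⊓ range ι ≠ ⊥) (f : E →ₗ[R] E) :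
    ∃ r : R, ∀ x, f x = r • x := by
  choose r hr using fun t => exists_smul_eq_on_torsionBySet ι hess t f
  have hcauchy : ∀ {m n : ℕ}, m ≤ n →
      r m ≡ r n [SMOD (maximalIdeal R ^ m • ⊤ : Submodule R R)] := by
    intro m n hmn
    rw [SModEq.sub_mem, smul_eq_mul, Ideal.mul_top]
    refine mem_pow_of_forall_smul_eq_zero ι hι fun x hx => ?_
    rw [sub_smul, ← hr m x hx, ← hr n x (torsionBySet_le_torsionBySet_pow m n hmn _ hx), sub_self]
  obtain ⟨L, hL⟩ := IsPrecomplete.prec inferInstance hcauchy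
  refine ⟨L, fun x => ?_⟩
  obtain ⟨t, ht⟩ := exists_mem_torsionBySet_pow ι hess x
  have hrL := SModEq.sub_mem.mp (hL t)
  rw [smul_eq_mul, Ideal.mul_top] at hrL
  rw [hr t x ht, ← sub_eq_zero, ← sub_smul]
  exact (mem_torsionBySet_iff _ _).mp ht ⟨_, hrL⟩

theorem applyₗ_injective [Module.Injective R E] (hι : Function.Injective ι) {M : Type u}
    [AddCommGroup M] [Module R M] :
    Function.Injective (applyₗ : M →ₗ[R] (M →ₗ[R] E) →ₗ[R] E) := fun _ _ h =>
  eq_of_forall_apply_eq ι hι (LinearMap.congr_fun h)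

theorem applyₗ_surjective_pi [IsNoetherianRing R] [IsAdicComplete (maximalIdeal R) R]
    [Module.Injective R E] (hι : Function.Injective ι)
    (hess : ∀ N : Submodule R E, N ≠ ⊥ → N ⊓ range ι ≠ ⊥) {J : Type*} [Finite J] :
    Function.Surjective (applyₗ : (J → E) →ₗ[R] ((J → E) →ₗ[R] E) →ₗ[R] E) := by
  classical
  have := Fintype.ofFinite J
  intro ξ
  refine ⟨fun j => ξ (proj j), LinearMap.ext fun Θ => ?_⟩
  choose r hr using fun j => exists_smul_eq ι hι hess (Θ ∘ₗ single R (fun _ => E) j)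
  have hΘ : Θ = ∑ j, r j • proj j := pi_ext fun i x => by
    simpa [Pi.single_apply] using hr i x
  rw [hΘ]
  simp

theorem exists_injective_pi [Module.Injective R E] (hι : Function.Injective ι) {M : Type u}
    [AddCommGroup M] [Module R M] [IsArtinian R M] :
    ∃ s : Finset (M →ₗ[R] E), Function.Injective (LinearMap.pi fun θ : s => (θ : M →ₗ[R] E)) := by
  classical
  obtain ⟨_, ⟨s, rfl⟩, hmin⟩ := IsArtinian.set_has_minimal
    {N : Submodule R M | ∃ s : Finset (M →ₗ[R] E), N = s.inf ker} ⟨⊤, ∅, rfl⟩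
  refine ⟨s, ker_eq_bot.mp (eq_bot_iff.mpr fun x hx => ?_)⟩
  by_contra hx0
  obtain ⟨θ, hθ⟩ := exists_apply_ne_zero ι hι hx0
  have hxs : x ∈ s.inf ker := by
    simpa [mem_finsetInf, funext_iff] using hx
  refine hmin _ ⟨insert θ s, rfl⟩ (lt_of_le_of_ne ?_ fun heq => hθ ?_)
  · rw [Finset.inf_insert]
    exact inf_le_right
  · have : x ∈ (insert θ s).inf ker := heq ▸ hxs
    rw [Finset.inf_insert] at this
    exact this.1

theorem applyₗ_surjective_of_injective [Module.Injective R E] (hι : Function.Injective ι)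
    {M N : Type u} [AddCommGroup M] [Module R M] [AddCommGroup N] [Module R N]
    (i : M →ₗ[R] N) (hi : Function.Injective i)
    (hN : Function.Surjective (applyₗ : N →ₗ[R] (N →ₗ[R] E) →ₗ[R] E)) :
    Function.Surjective (applyₗ : M →ₗ[R] (M →ₗ[R] E) →ₗ[R] E) := by
  intro ξ
  obtain ⟨y, hy⟩ := hN (ξ ∘ₗ lcomp R E i)
  have hy' : ∀ Θ : N →ₗ[R] E, ξ (Θ ∘ₗ i) = Θ y := fun Θ => (LinearMap.congr_fun hy Θ).symm
  obtain ⟨x, rfl⟩ : y ∈ range i := by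
    by_contra hyi
    obtain ⟨η, hη⟩ := exists_apply_ne_zero ι hι (x := (range i).mkQ y)
      (by rwa [ne_eq, mkQ_apply, Quotient.mk_eq_zero])
    have hzero : (η ∘ₗ (range i).mkQ) ∘ₗ i = 0 := by
      ext m
      simp [(Quotient.mk_eq_zero _).mpr (mem_range_self i m)]
    exact hη (by simpa [hzero] using (hy' (η ∘ₗ (range i).mkQ)).symm)
  refine ⟨x, LinearMap.ext fun θ => ?_⟩
  obtain ⟨Θ, hΘ⟩ := Module.Injective.out i hi θ
  obtain rfl : Θ ∘ₗ i = θ := LinearMap.ext hΘ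
  exact (hy' Θ).symm

theorem applyₗ_bijective [IsNoetherianRing R] [IsAdicComplete (maximalIdeal R) R]
    [Module.Injective R E] (hι : Function.Injective ι)
    (hess : ∀ N : Submodule R E, N ≠ ⊥ → N ⊓ range ι ≠ ⊥) {M : Type u}
    [AddCommGroup M] [Module R M] [IsArtinian R M] :
    Function.Bijective (applyₗ : M →ₗ[R] (M →ₗ[R] E) →ₗ[R] E) := by
  obtain ⟨s, hs⟩ := exists_injective_pi ι hι (M := M)
  exact ⟨applyₗ_injective ι hι, applyₗ_surjective_of_injective ι hι _ hs
    (applyₗ_surjective_pi ι hι hess)⟩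

end Matlis

/-- Let `(R, m)` be a complete Noetherian local ring, `E` an injective hull of
the residue field `R/m` (an injective module together with an injective linear map
`ι : R/m → E` with essential image), and `D(-) = Hom_R(-, E)` the Matlis duality functor.
Let `M` be an Artinian `R`-module. Then the natural map
`Φ : Hom_R(M, M) → Hom_R(D(M), D(M))`, `Φ(φ)(θ) = θ ∘ φ`, is bijective. -/
theorem matlis_endomorphism_bijective_of_isArtinian
    (R : Type) [CommRing R] [IsNoetherianRing R] [IsLocalRing R]
    [IsAdicComplete (IsLocalRing.maximalIdeal R) R]
    (E : Type) [AddCommGroup E] [Module R E] [Module.Injective R E]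
    (ι : IsLocalRing.ResidueField R →ₗ[R] E) (hι : Function.Injective ι)
    (hess : ∀ N : Submodule R E, N ≠ ⊥ → N ⊓ LinearMap.range ι ≠ ⊥)
    (M : Type) [AddCommGroup M] [Module R M] [IsArtinian R M] :
    Function.Bijective (fun φ : M →ₗ[R] M =>
      (LinearMap.lcomp R E φ : (M →ₗ[R] E) →ₗ[R] (M →ₗ[R] E))) := by
  refine ⟨fun φ₁ φ₂ h => LinearMap.ext fun x => Matlis.eq_of_forall_apply_eq ι hι fun θ =>
    LinearMap.congr_fun (LinearMap.congr_fun h θ) x, fun ψ => ?_⟩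
  let ev := LinearEquiv.ofBijective applyₗ (Matlis.applyₗ_bijective ι hι hess (M := M))
  refine ⟨ev.symm.toLinearMap ∘ₗ lcomp R E ψ ∘ₗ ev.toLinearMap, LinearMap.ext fun θ => ?_⟩
  ext x
  calc θ (ev.symm (lcomp R E ψ (ev x)))
      = ev (ev.symm (lcomp R E ψ (ev x))) θ := rfl
    _ = ψ θ x := by rw [ev.apply_symm_apply]; rfl
end

section
/- Let (A, m) be a Noetherian local ring of prime characteristic p > 0, let I ⊆ A be an ideal, and let i ≥ 0 be an integer. Then there is a natural isomorphism of A-modules between the inverse limit over e of the local cohomology modules H^i_m(A/I^{[p^e]}) (with transition maps induced by the natural surjections A/I^{[p^{e+1}]} → A/I^{[p^e]}) and the i-th formal local cohomology module, i.e. the inverse limit over n of H^i_m(A/I^n) (with transition maps induced by the natural surjections A/I^{n+1} → A/I^n): lim_e H^i_m(A/I^{[p^e]}) ≅ lim_n H^i_m(A/I^n). -/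
/-!
Both `I ^ n` and `I^{[p^e]}` are cofinal in each other: `I^{[q]} ≤ I ^ n` as soon as `n ≤ q`,
and since `I` is finitely generated and contained in the radical of `I^{[q]}`, some power of `I`
lies in `I^{[q]}`. Any functor applied to the quotients by two mutually cofinal decreasing
chains of ideals gives towers with isomorphic inverse limits, by composing with the transition
maps in both directions.
-/

open IsLocalRing

/-- The inverse limit of an `ℕ`-indexed tower of modules `... → M (n+1) → M n → ... → M 0`,
realized as the submodule of the product consisting of the compatible families. -/
def Module.invLimit (A : Type*) [Semiring A] (M : ℕ → Type*)
    [∀ n, AddCommMonoid (M n)] [∀ n, Module A (M n)]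
    (t : ∀ n, M (n + 1) →ₗ[A] M n) : Submodule A (∀ n, M n) where
  carrier := {f | ∀ n, t n (f (n + 1)) = f n}
  add_mem' := fun ha hb n => by simp [map_add, ha n, hb n]
  zero_mem' := fun n => by simp
  smul_mem' := fun c a ha n => by simp [map_smul, ha n]

/-- The Frobenius power `I^{[q]}`: the ideal generated by the `q`-th powers of the
elements of `I`. -/
def Ideal.frobPow {A : Type*} [CommRing A] (I : Ideal A) (q : ℕ) : Ideal A :=
  Ideal.span ((fun a => a ^ q) '' (I : Set A))

/-- The Frobenius powers `I^{[p^e]}` form a decreasing family. -/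
lemma Ideal.frobPow_succ_le {A : Type*} [CommRing A] (I : Ideal A) {p : ℕ} (hp : 1 ≤ p)
    (e : ℕ) : I.frobPow (p ^ (e + 1)) ≤ I.frobPow (p ^ e) := by
  rw [Ideal.frobPow, Ideal.span_le]
  rintro _ ⟨a, ha, rfl⟩
  have key : a ^ p ^ (e + 1) = a ^ p ^ e * a ^ (p ^ e * (p - 1)) := by
    rw [← pow_add]
    congr 1
    have : p ^ e + p ^ e * (p - 1) = p ^ e * (1 + (p - 1)) := by ring
    rw [this, Nat.add_sub_cancel' hp, pow_succ]
  show a ^ p ^ (e + 1) ∈ I.frobPow (p ^ e)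
  rw [key]
  exact Ideal.mul_mem_right _ _ (Ideal.subset_span ⟨a, ha, rfl⟩)

namespace CategoryTheory.Functor

variable {A : Type} [CommRing A] (F : ModuleCat A ⥤ ModuleCat A)

noncomputable abbrev mapFactor {J K : Ideal A} (h : J ≤ K) :
    F.obj (ModuleCat.of A (A ⧸ J)) →ₗ[A] F.obj (ModuleCat.of A (A ⧸ K)) :=
  (F.map (ModuleCat.ofHom (Submodule.factor h))).hom

lemma mapFactor_mapFactor {J K L : Ideal A} (hJK : J ≤ K) (hKL : K ≤ L) (x) :
    F.mapFactor hKL (F.mapFactor hJK x) = F.mapFactor (hJK.trans hKL) x := by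
  rw [← LinearMap.comp_apply, ← ModuleCat.hom_comp, ← F.map_comp, ← ModuleCat.ofHom_comp,
    Submodule.factor_comp]

lemma mapFactor_refl (J : Ideal A) (x) : F.mapFactor (le_refl J) x = x := by
  rw [mapFactor, Submodule.factor, Submodule.mapQ_id, ModuleCat.ofHom_id, F.map_id]
  rfl

variable (J K : ℕ → Ideal A) (hJ : Antitone J) (hK : Antitone K)

noncomputable abbrev towerLimit : Submodule A (∀ n, F.obj (ModuleCat.of A (A ⧸ J n))) :=
  Module.invLimit A _ fun n => F.mapFactor (hJ n.le_succ)

variable {F J hJ}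

lemma mapFactor_apply_of_mem_towerLimit {f} (hf : f ∈ F.towerLimit J hJ) {m n : ℕ}
    (hmn : m ≤ n) :
    F.mapFactor (hJ hmn) (f n) = f m := by
  induction n, hmn using Nat.le_induction with
  | base => exact F.mapFactor_refl _ _
  | succ n hmn ih => rw [← ih, ← hf n, F.mapFactor_mapFactor]

lemma mapFactor_apply_eq_of_mem_towerLimit {f} (hf : f ∈ F.towerLimit J hJ) {L : Ideal A}
    {m m' : ℕ} (h : J m ≤ L) (h' : J m' ≤ L) : F.mapFactor h (f m) = F.mapFactor h' (f m') := by
  wlog hmm' : m ≤ m' generalizing m m'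
  · exact (this h' h (le_of_not_ge hmm')).symm
  rw [← mapFactor_apply_of_mem_towerLimit hf hmm', F.mapFactor_mapFactor]

variable (F J hJ)

/-- The `n`-th component is read off from any `A ⧸ J m` mapping onto `A ⧸ K n`; by
`mapFactor_apply_eq_of_mem_towerLimit` the choice of `m` does not matter. -/
noncomputable def towerLimitMap (hJK : ∀ n, ∃ m, J m ≤ K n) :
    F.towerLimit J hJ →ₗ[A] F.towerLimit K hK :=
  (LinearMap.pi fun n => (F.mapFactor (hJK n).choose_spec).comp
      ((LinearMap.proj (hJK n).choose).comp (F.towerLimit J hJ).subtype)).codRestrict _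
    fun f n => by
      simp only [LinearMap.pi_apply, LinearMap.comp_apply, LinearMap.proj_apply,
        Submodule.subtype_apply, F.mapFactor_mapFactor]
      exact mapFactor_apply_eq_of_mem_towerLimit f.2 _ _

variable {J K hK} in
lemma towerLimitMap_apply (hJK : ∀ n, ∃ m, J m ≤ K n) (f : F.towerLimit J hJ) (n : ℕ) :
    (F.towerLimitMap J K hJ hK hJK f).1 n = F.mapFactor (hJK n).choose_spec (f.1 _) :=
  rfl

lemma towerLimitMap_towerLimitMap (hJK : ∀ n, ∃ m, J m ≤ K n) (hKJ : ∀ n, ∃ m, K m ≤ J n)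
    (f : F.towerLimit K hK) :
    F.towerLimitMap J K hJ hK hJK (F.towerLimitMap K J hK hJ hKJ f) = f := by
  ext n
  rw [towerLimitMap_apply, towerLimitMap_apply, F.mapFactor_mapFactor,
    mapFactor_apply_eq_of_mem_towerLimit f.2 _ (le_refl (K n)), F.mapFactor_refl]

noncomputable def towerLimitEquiv (hJK : ∀ n, ∃ m, J m ≤ K n) (hKJ : ∀ n, ∃ m, K m ≤ J n) :
    F.towerLimit J hJ ≃ₗ[A] F.towerLimit K hK :=
  .ofLinearMap (F.towerLimitMap J K hJ hK hJK) (F.towerLimitMap K J hK hJ hKJ)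
    (LinearMap.ext (F.towerLimitMap_towerLimitMap J K hJ hK hJK hKJ))
    (LinearMap.ext (F.towerLimitMap_towerLimitMap K J hK hJ hKJ hJK))

end CategoryTheory.Functor

namespace Ideal

variable {A : Type*} [CommRing A]

lemma frobPow_le_pow (I : Ideal A) {q n : ℕ} (h : n ≤ q) : I.frobPow q ≤ I ^ n := by
  rw [frobPow, span_le]
  rintro _ ⟨a, ha, rfl⟩
  exact pow_le_pow_right h (pow_mem_pow ha q)

lemma le_radical_frobPow (I : Ideal A) (q : ℕ) : I ≤ (I.frobPow q).radical :=
  fun a ha => ⟨q, subset_span ⟨a, ha, rfl⟩⟩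

lemma exists_pow_le_frobPow [IsNoetherianRing A] (I : Ideal A) (q : ℕ) :
    ∃ n, I ^ n ≤ I.frobPow q :=
  exists_pow_le_of_le_radical_of_fg (I.le_radical_frobPow q) (IsNoetherian.noetherian I)

end Ideal

/-- Let `(A, m)` be a Noetherian local ring of prime characteristic `p > 0`,
`I ⊆ A` an ideal and `i ≥ 0` an integer. Then there is a natural `A`-module isomorphism
`lim_e H^i_m(A / I^{[p^e]}) ≅ lim_n H^i_m(A / I^n)`, the transition maps being induced by the
natural surjections between the quotients. -/
theorem invLimit_localCohomology_frobPow_iso_invLimit_localCohomology_pow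
    (A : Type) [CommRing A] [IsNoetherianRing A] [IsLocalRing A]
    (p : ℕ) (hp : p.Prime) (I : Ideal A) (i : ℕ) :
    Nonempty (
      (Module.invLimit A
        (fun e => ((localCohomology (maximalIdeal A) i).obj
          (ModuleCat.of A (A ⧸ I.frobPow (p ^ e)))))
        (fun e => ((localCohomology (maximalIdeal A) i).map
          (ModuleCat.ofHom (Submodule.mapQ (I.frobPow (p ^ (e + 1))) (I.frobPow (p ^ e))
            LinearMap.id (by simpa using I.frobPow_succ_le hp.one_lt.le e)))).hom))
      ≃ₗ[A]
      (Module.invLimit A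
        (fun n => ((localCohomology (maximalIdeal A) i).obj
          (ModuleCat.of A (A ⧸ I ^ n))))
        (fun n => ((localCohomology (maximalIdeal A) i).map
          (ModuleCat.ofHom (Submodule.mapQ (I ^ (n + 1)) (I ^ n)
            LinearMap.id (by simpa using Ideal.pow_le_pow_right (Nat.le_succ n))))).hom))) :=
  ⟨(localCohomology (maximalIdeal A) i).towerLimitEquiv (fun e => I.frobPow (p ^ e)) (I ^ ·)
    (antitone_nat_of_succ_le (I.frobPow_succ_le hp.one_lt.le)) (fun _ _ => Ideal.pow_le_pow_right)
    (fun n => ⟨n, I.frobPow_le_pow (Nat.lt_pow_self hp.one_lt).le⟩)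
    (fun _ => I.exists_pow_le_frobPow _)⟩
end
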